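/- Let α ∈ (0,1) and for R > 0 and each nonnegative integer k define λ_k(R) = ∫_ℝ (1 − cos(kt)) |t|^{−2−α} dt − ∫_ℝ (1 + cos(kt)) ( 1 + (2R/|t|)² )^{−(2+α)/2} |t|^{−2−α} dt (both integrals converge absolutely). Let R = R(α) > 0 be the unique value with λ₁(R) = 0. Then λ₀(R) < 0 = λ₁(R) < λ₂(R) < λ₃(R) < ⋯, i.e. the sequence (λ_k(R))_{k≥0} is strictly increasing and λ₁(R) = 0. -/

import Mathlib

open MeasureTheory Filter Topology Real

/-- `λ_k(R) = ∫_ℝ (1−cos(kt))|t|^{−2−α} dt − ∫_ℝ (1+cos(kt))(1+(2R/|t|)²)^{−(2+α)/2}|t|^{−2−α} dt`. -/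
noncomputable def lamK (α R : ℝ) (k : ℕ) : ℝ :=
  (∫ t : ℝ, (1 - Real.cos (k * t)) * |t| ^ (-(2 + α))) -
    ∫ t : ℝ, (1 + Real.cos (k * t)) * (1 + (2 * R / |t|) ^ 2) ^ (-(2 + α) / 2) * |t| ^ (-(2 + α))

/-!
Write `K_a(t) = (t² + a²)^(-(2+α)/2)`. Off `t = 0` the two integrands of `λ_k(R)` are
`(1 - cos kt) K_0` and `(1 + cos kt) K_{2R}`, so `λ_0 = -2 ∫ K_{2R} < 0` and
`λ_{k+1} - λ_k = ∫ (cos kt - cos (k+1)t) (K_0 + K_{2R})`.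
Since `Γ(p) s^(-p) = ∫₀^∞ u^(p-1) e^(-su) du`, each `K_a` is a positive mixture of the Gaussians
`e^(-ut²)`, whose cosine transforms `√(π/u) e^(-ξ²/4u)` decrease strictly in `|ξ|`; hence every
increment is positive.
-/

open Set

lemma integral_cos_mul_mul_exp_neg_mul_sq {b : ℝ} (hb : 0 < b) (c : ℝ) :
    ∫ x : ℝ, cos (c * x) * exp (-b * x ^ 2) = √(π / b) * exp (-c ^ 2 / (4 * b)) := by
  have hb' : 0 < (b : ℂ).re := by simpa using hb
  have hint : Integrable fun x : ℝ => Complex.exp (Complex.I * c * x) * Complex.exp (-b * x ^ 2) :=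
    (integrable_cexp_quadratic hb' (Complex.I * c) 0).congr <| .of_forall fun x => by
      dsimp only; rw [← Complex.exp_add]; ring_nf
  have hre (x : ℝ) : cos (c * x) * exp (-b * x ^ 2) =
      RCLike.re (Complex.exp (Complex.I * c * x) * Complex.exp (-b * x ^ 2)) := by
    rw [← Complex.exp_add, show Complex.I * c * x + -b * x ^ 2 =
        ((-b * x ^ 2 : ℝ) : ℂ) + (c * x : ℝ) * Complex.I by push_cast; ring,
      Complex.exp_add, ← Complex.ofReal_exp, RCLike.re_to_complex, Complex.re_ofReal_mul,
      Complex.exp_ofReal_mul_I_re, mul_comm]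
  simp_rw [hre, integral_re hint, fourierIntegral_gaussian hb']
  rw [show ((π : ℂ) / b) ^ (1 / 2 : ℂ) = ((√(π / b) : ℝ) : ℂ) by
      rw [sqrt_eq_rpow, Complex.ofReal_cpow (by positivity)]; push_cast; ring_nf,
    show (-(c : ℂ) ^ 2 / (4 * b)) = ((-c ^ 2 / (4 * b) : ℝ) : ℂ) by push_cast; ring,
    ← Complex.ofReal_exp, ← Complex.ofReal_mul]
  rfl

lemma integrable_cos_mul_mul_exp_neg_mul_sq {b : ℝ} (hb : 0 < b) (c : ℝ) :
    Integrable fun x : ℝ => cos (c * x) * exp (-b * x ^ 2) :=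
  (integrable_exp_neg_mul_sq hb).bdd_mul (c := 1) (by fun_prop)
    (.of_forall fun x => by simpa using abs_cos_le_one (c * x))

lemma integral_cos_sub_cos_mul_exp_neg_mul_sq_pos {ξ η u : ℝ} (hξη : |ξ| < |η|) (hu : 0 < u) :
    0 < ∫ t, (cos (ξ * t) - cos (η * t)) * exp (-u * t ^ 2) := by
  simp_rw [sub_mul]
  rw [integral_sub (integrable_cos_mul_mul_exp_neg_mul_sq hu ξ)
      (integrable_cos_mul_mul_exp_neg_mul_sq hu η), integral_cos_mul_mul_exp_neg_mul_sq hu,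
    integral_cos_mul_mul_exp_neg_mul_sq hu, ← mul_sub]
  refine mul_pos (sqrt_pos.2 (by positivity)) (sub_pos.2 (exp_lt_exp.2 ?_))
  exact div_lt_div_of_pos_right (neg_lt_neg (sq_lt_sq.2 hξη)) (by positivity)

lemma integral_rpow_sub_one_mul_exp_neg_mul {p s : ℝ} (hp : 0 < p) (hs : 0 < s) :
    ∫ u in Ioi 0, u ^ (p - 1) * exp (-(s * u)) = s ^ (-p) * Gamma p := by
  rw [integral_rpow_mul_exp_neg_mul_Ioi hp hs, one_div, inv_rpow hs.le, rpow_neg hs.le]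

lemma integrableOn_rpow_sub_one_mul_exp_neg_mul {p s : ℝ} (hp : 0 < p) (hs : 0 < s) :
    IntegrableOn (fun u : ℝ => u ^ (p - 1) * exp (-(s * u))) (Ioi 0) := by
  simpa using integrableOn_rpow_mul_exp_neg_mul_rpow (p := 1) (s := p - 1) (by linarith) one_pos hs

lemma integrable_uncurry_mul_rpow_sub_one_mul_exp_neg {p a : ℝ} (hp : 0 < p) {φ : ℝ → ℝ}
    (hφ : Measurable φ) (hint : Integrable fun t => φ t * (t ^ 2 + a ^ 2) ^ (-p)) :
    Integrable (Function.uncurry fun t u => φ t * (u ^ (p - 1) * exp (-((t ^ 2 + a ^ 2) * u))))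
      (volume.prod (volume.restrict (Ioi 0))) := by
  have hpos : ∀ᵐ t : ℝ, 0 < t ^ 2 + a ^ 2 := by
    filter_upwards [Measure.ae_ne volume 0] with t ht using by positivity
  rw [integrable_prod_iff (by fun_prop : Measurable _).aestronglyMeasurable]
  refine ⟨?_, (hint.norm.mul_const (Gamma p)).congr ?_⟩
  · filter_upwards [hpos] with t ht
    exact (integrableOn_rpow_sub_one_mul_exp_neg_mul hp ht).const_mul (φ t)
  · filter_upwards [hpos] with t ht
    rw [norm_mul, norm_of_nonneg (rpow_nonneg ht.le _), mul_assoc,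
      ← integral_rpow_sub_one_mul_exp_neg_mul hp ht, ← integral_const_mul]
    refine setIntegral_congr_fun measurableSet_Ioi fun u (hu : 0 < u) => ?_
    simp only [Function.uncurry_apply_pair, norm_mul,
      norm_of_nonneg (mul_nonneg (rpow_nonneg hu.le _) (exp_pos _).le)]

theorem integral_mul_sq_add_sq_rpow_neg_pos {p a : ℝ} (hp : 0 < p) {φ : ℝ → ℝ}
    (hφ : Measurable φ) (hint : Integrable fun t => φ t * (t ^ 2 + a ^ 2) ^ (-p))
    (hgauss : ∀ u > 0, 0 < ∫ t, φ t * exp (-u * t ^ 2)) :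
    0 < ∫ t, φ t * (t ^ 2 + a ^ 2) ^ (-p) := by
  have hF := integrable_uncurry_mul_rpow_sub_one_mul_exp_neg hp hφ hint
  have hleft : ∫ t, ∫ u in Ioi 0, φ t * (u ^ (p - 1) * exp (-((t ^ 2 + a ^ 2) * u))) =
      Gamma p * ∫ t, φ t * (t ^ 2 + a ^ 2) ^ (-p) := by
    rw [← integral_const_mul]
    refine integral_congr_ae ?_
    filter_upwards [Measure.ae_ne volume 0] with t ht
    rw [integral_const_mul, integral_rpow_sub_one_mul_exp_neg_mul hp (by positivity)]
    ring
  have hright (u : ℝ) : ∫ t, φ t * (u ^ (p - 1) * exp (-((t ^ 2 + a ^ 2) * u))) =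
      u ^ (p - 1) * exp (-(a ^ 2 * u)) * ∫ t, φ t * exp (-u * t ^ 2) := by
    rw [← integral_const_mul]
    congr 1 with t
    rw [show -((t ^ 2 + a ^ 2) * u) = -(a ^ 2 * u) + -u * t ^ 2 by ring, exp_add]
    ring
  have hmixture : 0 < ∫ u in Ioi 0, ∫ t, φ t * (u ^ (p - 1) * exp (-((t ^ 2 + a ^ 2) * u))) := by
    have hpos : ∀ u ∈ Ioi (0 : ℝ),
        0 < ∫ t, φ t * (u ^ (p - 1) * exp (-((t ^ 2 + a ^ 2) * u))) := fun u (hu : 0 < u) => by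
      rw [hright]
      exact mul_pos (mul_pos (rpow_pos_of_pos hu _) (exp_pos _)) (hgauss u hu)
    rw [setIntegral_pos_iff_support_of_nonneg_ae
      ((ae_restrict_iff' measurableSet_Ioi).2 (.of_forall fun u hu => (hpos u hu).le))
      hF.integral_prod_right, inter_eq_right.2 fun u hu => Function.mem_support.2 (hpos u hu).ne',
      volume_Ioi]
    exact ENNReal.zero_lt_top
  rw [← integral_integral_swap hF, hleft] at hmixture
  exact pos_of_mul_pos_right hmixture (Gamma_pos_of_pos hp).le

lemma sq_rpow_div_two (t x : ℝ) : (t ^ 2) ^ (x / 2) = |t| ^ x := by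
  rw [← sq_abs, ← rpow_natCast, ← rpow_mul (abs_nonneg t)]
  ring_nf

lemma sq_add_sq_rpow_div_two_le {x : ℝ} (hx : x ≤ 0) {t : ℝ} (ht : t ≠ 0) (a : ℝ) :
    (t ^ 2 + a ^ 2) ^ (x / 2) ≤ |t| ^ x := by
  rw [← sq_rpow_div_two]
  exact rpow_le_rpow_of_nonpos (by positivity) (le_add_of_nonneg_right (sq_nonneg a)) (by linarith)

lemma one_add_div_abs_sq_rpow_mul_abs_rpow {t : ℝ} (ht : t ≠ 0) (a x : ℝ) :
    (1 + (a / |t|) ^ 2) ^ (x / 2) * |t| ^ x = (t ^ 2 + a ^ 2) ^ (x / 2) := by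
  rw [← sq_rpow_div_two, ← mul_rpow (by positivity) (by positivity), div_pow, sq_abs]
  congr 1
  field_simp

lemma integrable_of_even_of_integrableOn_Ioi {E : Type*} [NormedAddCommGroup E] {f : ℝ → E}
    (heven : ∀ t, f (-t) = f t) (hf : IntegrableOn f (Ioi 0)) : Integrable f := by
  rw [← integrableOn_univ, ← Iio_union_Ici (a := (0 : ℝ)), integrableOn_union,
    integrableOn_Ici_iff_integrableOn_Ioi]
  refine ⟨?_, hf⟩
  rw [← (Measure.measurePreserving_neg (volume : Measure ℝ)).integrableOn_comp_preimage
      (Homeomorph.neg ℝ).measurableEmbedding]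
  simpa only [Function.comp_def, heven, neg_preimage, neg_Iio, neg_zero] using hf

lemma integrable_one_sub_cos_mul_abs_rpow {α : ℝ} (hα₀ : -1 < α) (hα₁ : α < 1) (m : ℝ) :
    Integrable fun t : ℝ => (1 - cos (m * t)) * |t| ^ (-(2 + α)) := by
  refine integrable_of_even_of_integrableOn_Ioi (fun t => by rw [mul_neg, cos_neg, abs_neg]) ?_
  have hmeas : AEStronglyMeasurable fun t : ℝ => (1 - cos (m * t)) * |t| ^ (-(2 + α)) := by
    fun_prop
  have hnorm {t : ℝ} (ht : 0 < t) : ‖(1 - cos (m * t)) * |t| ^ (-(2 + α))‖ =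
      (1 - cos (m * t)) * t ^ (-(2 + α)) := by
    rw [abs_of_pos ht, norm_of_nonneg (mul_nonneg (sub_nonneg.2 (cos_le_one _)) (by positivity))]
  rw [← Ioc_union_Ioi_eq_Ioi zero_le_one, integrableOn_union]
  constructor
  · have hint : IntegrableOn (fun t : ℝ => m ^ 2 / 2 * t ^ (-α)) (Ioc 0 1) :=
      ((intervalIntegrable_iff_integrableOn_Ioc_of_le zero_le_one).1
        (intervalIntegral.intervalIntegrable_rpow' (by linarith))).const_mul _
    refine hint.mono' hmeas.restrict ((ae_restrict_iff' measurableSet_Ioc).2 (.of_forall ?_))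
    rintro t ⟨ht, -⟩
    rw [hnorm ht]
    calc (1 - cos (m * t)) * t ^ (-(2 + α)) ≤ (m ^ 2 / 2 * t ^ (2 : ℝ)) * t ^ (-(2 + α)) := by
          gcongr
          rw [rpow_two]
          linarith [one_sub_sq_div_two_le_cos (x := m * t), mul_pow m t 2]
      _ = m ^ 2 / 2 * t ^ (-α) := by rw [mul_assoc, ← rpow_add ht]; ring_nf
  · have hint : IntegrableOn (fun t : ℝ => 2 * t ^ (-(2 + α))) (Ioi 1) :=
      (integrableOn_Ioi_rpow_of_lt (by linarith) one_pos).const_mul 2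
    refine hint.mono' hmeas.restrict ((ae_restrict_iff' measurableSet_Ioi).2 (.of_forall ?_))
    intro t (ht : 1 < t)
    rw [hnorm (one_pos.trans ht)]
    gcongr
    linarith [neg_one_le_cos (m * t)]

lemma integrable_sq_add_sq_rpow {α a : ℝ} (hα : -1 < α) (ha : a ≠ 0) :
    Integrable fun t : ℝ => (t ^ 2 + a ^ 2) ^ (-(2 + α) / 2) := by
  have h := ((integrable_rpow_neg_one_add_norm_sq (E := ℝ) (μ := volume) (r := 2 + α)
    (by simp; linarith)).comp_div ha).const_mul ((a ^ 2) ^ (-(2 + α) / 2))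
  refine h.congr (.of_forall fun t => ?_)
  dsimp only
  rw [norm_div, Real.norm_eq_abs, Real.norm_eq_abs, div_pow, sq_abs, sq_abs,
    ← mul_rpow (by positivity) (by positivity)]
  congr 1
  field_simp
  ring

lemma integrable_cos_sub_cos_mul_sq_add_sq_rpow {α : ℝ} (hα₀ : -1 < α) (hα₁ : α < 1)
    (ξ η a : ℝ) :
    Integrable fun t : ℝ => (cos (ξ * t) - cos (η * t)) * (t ^ 2 + a ^ 2) ^ (-(2 + α) / 2) := by
  refine ((integrable_one_sub_cos_mul_abs_rpow hα₀ hα₁ η).sub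
    (integrable_one_sub_cos_mul_abs_rpow hα₀ hα₁ ξ)).norm.mono' (by fun_prop) ?_
  filter_upwards [Measure.ae_ne volume 0] with t ht
  rw [Pi.sub_apply, ← sub_mul, sub_sub_sub_cancel_left, norm_mul, norm_mul,
    norm_of_nonneg (rpow_nonneg (abs_nonneg t) _),
    norm_of_nonneg (rpow_nonneg (by positivity : (0 : ℝ) ≤ t ^ 2 + a ^ 2) _)]
  gcongr
  exact sq_add_sq_rpow_div_two_le (by linarith) ht a

theorem integral_cos_sub_cos_mul_sq_add_sq_rpow_pos {α : ℝ} (hα₀ : -1 < α) (hα₁ : α < 1)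
    {ξ η : ℝ} (hξη : |ξ| < |η|) (a : ℝ) :
    0 < ∫ t, (cos (ξ * t) - cos (η * t)) * (t ^ 2 + a ^ 2) ^ (-(2 + α) / 2) := by
  have hint := integrable_cos_sub_cos_mul_sq_add_sq_rpow hα₀ hα₁ ξ η a
  rw [neg_div] at hint ⊢
  exact integral_mul_sq_add_sq_rpow_neg_pos (by linarith) (by fun_prop) hint
    fun u hu => integral_cos_sub_cos_mul_exp_neg_mul_sq_pos hξη hu

section lamK

variable {α R : ℝ}

lemma lamK_integrand_ae_eq (m : ℝ) :
    (fun t : ℝ => (1 + cos (m * t)) * (1 + (2 * R / |t|) ^ 2) ^ (-(2 + α) / 2) * |t| ^ (-(2 + α)))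
      =ᵐ[volume] fun t => (1 + cos (m * t)) * (t ^ 2 + (2 * R) ^ 2) ^ (-(2 + α) / 2) := by
  filter_upwards [Measure.ae_ne volume 0] with t ht
  rw [mul_assoc, one_add_div_abs_sq_rpow_mul_abs_rpow ht]

lemma integrable_one_add_cos_mul_sq_add_sq_rpow (hα : -1 < α) (hR : R ≠ 0) (m : ℝ) :
    Integrable fun t : ℝ => (1 + cos (m * t)) * (t ^ 2 + (2 * R) ^ 2) ^ (-(2 + α) / 2) :=
  (integrable_sq_add_sq_rpow hα (mul_ne_zero two_ne_zero hR)).bdd_mul (c := 2) (by fun_prop)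
    (.of_forall fun t => by
      rw [norm_of_nonneg (by linarith [neg_one_le_cos (m * t)])]
      linarith [cos_le_one (m * t)])

lemma lamK_eq (k : ℕ) :
    lamK α R k = (∫ t, (1 - cos (k * t)) * |t| ^ (-(2 + α))) -
      ∫ t, (1 + cos (k * t)) * (t ^ 2 + (2 * R) ^ 2) ^ (-(2 + α) / 2) := by
  rw [lamK, integral_congr_ae (lamK_integrand_ae_eq _)]

lemma lamK_zero_neg (hα : -1 < α) (hR : R ≠ 0) : lamK α R 0 < 0 := by
  have hpos : 0 < ∫ t, (t ^ 2 + (2 * R) ^ 2) ^ (-(2 + α) / 2) :=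
    integral_pos_of_integrable_nonneg_nonzero (x := 0)
      ((by fun_prop : Continuous fun t : ℝ => t ^ 2 + (2 * R) ^ 2).rpow_const
        fun t => .inl (by positivity))
      (integrable_sq_add_sq_rpow hα (mul_ne_zero two_ne_zero hR))
      (fun t => by positivity) (by positivity)
  rw [lamK_eq]
  simp only [CharP.cast_eq_zero, zero_mul, cos_zero, sub_self, integral_zero]
  rw [show (1 : ℝ) + 1 = 2 by norm_num, integral_const_mul]
  linarith

lemma lamK_lt_lamK_succ (hα₀ : -1 < α) (hα₁ : α < 1) (hR : R ≠ 0) (k : ℕ) :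
    lamK α R k < lamK α R (k + 1) := by
  have hk : |(k : ℝ)| < |(k : ℝ) + 1| := by
    rw [abs_of_nonneg (by positivity), abs_of_nonneg (by positivity)]
    exact lt_add_one _
  have h₀ := integral_cos_sub_cos_mul_sq_add_sq_rpow_pos hα₀ hα₁ hk 0
  have h₁ := integral_cos_sub_cos_mul_sq_add_sq_rpow_pos hα₀ hα₁ hk (2 * R)
  simp only [zero_pow two_ne_zero, add_zero, sq_rpow_div_two] at h₀
  have e₀ : ∫ t, (cos (k * t) - cos ((k + 1) * t)) * |t| ^ (-(2 + α)) =
      (∫ t, (1 - cos ((k + 1) * t)) * |t| ^ (-(2 + α))) -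
        ∫ t, (1 - cos (k * t)) * |t| ^ (-(2 + α)) := by
    rw [← integral_sub (integrable_one_sub_cos_mul_abs_rpow hα₀ hα₁ _)
      (integrable_one_sub_cos_mul_abs_rpow hα₀ hα₁ _)]
    congr 1 with t
    ring
  have e₁ : ∫ t, (cos (k * t) - cos ((k + 1) * t)) * (t ^ 2 + (2 * R) ^ 2) ^ (-(2 + α) / 2) =
      (∫ t, (1 + cos (k * t)) * (t ^ 2 + (2 * R) ^ 2) ^ (-(2 + α) / 2)) -
        ∫ t, (1 + cos ((k + 1) * t)) * (t ^ 2 + (2 * R) ^ 2) ^ (-(2 + α) / 2) := by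
    rw [← integral_sub (integrable_one_add_cos_mul_sq_add_sq_rpow hα₀ hR _)
      (integrable_one_add_cos_mul_sq_add_sq_rpow hα₀ hR _)]
    congr 1 with t
    ring
  rw [lamK_eq, lamK_eq]
  push_cast
  linarith

end lamK

theorem eigenvalues_strictly_increasing_general
    (α R : ℝ) (hα : α ∈ Set.Ioo (0:ℝ) 1) (hR : 0 < R) (hR1 : lamK α R 1 = 0) :
    (∀ k : ℕ, Integrable (fun t : ℝ => (1 - Real.cos (k * t)) * |t| ^ (-(2 + α)))) ∧
    (∀ k : ℕ, Integrable (fun t : ℝ =>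
      (1 + Real.cos (k * t)) * (1 + (2 * R / |t|) ^ 2) ^ (-(2 + α) / 2) * |t| ^ (-(2 + α)))) ∧
    lamK α R 0 < 0 ∧ lamK α R 1 = 0 ∧ StrictMono (lamK α R) := by
  obtain ⟨hα_pos, hα₁⟩ := hα
  have hα₀ : -1 < α := by linarith
  exact ⟨fun k => integrable_one_sub_cos_mul_abs_rpow hα₀ hα₁ k,
    fun k => (integrable_one_add_cos_mul_sq_add_sq_rpow hα₀ hR.ne' k).congr
      (lamK_integrand_ae_eq _).symm,
    lamK_zero_neg hα₀ hR.ne', hR1, strictMono_nat_of_lt_succ (lamK_lt_lamK_succ hα₀ hα₁ hR.ne')⟩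

/-- **The eigenvalue sequence is strictly increasing.** Let `α ∈ (0,1)` and let `R > 0` be the
(unique) value with `λ₁(R) = 0`. Then both integrals defining `λ_k(R)` converge absolutely for
every `k`, and `λ₀(R) < 0 = λ₁(R) < λ₂(R) < λ₃(R) < ⋯`, i.e. `k ↦ λ_k(R)` is strictly
increasing with `λ₀(R) < 0` and `λ₁(R) = 0`. -/
theorem eigenvalues_strictly_increasing
    (α R : ℝ) (hα : α ∈ Set.Ioo (0:ℝ) 1) (hR : 0 < R) (hR1 : lamK α R 1 = 0)
    (hRuniq : ∀ R' : ℝ, 0 < R' → lamK α R' 1 = 0 → R' = R) :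
    (∀ k : ℕ, Integrable (fun t : ℝ => (1 - Real.cos (k * t)) * |t| ^ (-(2 + α)))) ∧
    (∀ k : ℕ, Integrable (fun t : ℝ =>
      (1 + Real.cos (k * t)) * (1 + (2 * R / |t|) ^ 2) ^ (-(2 + α) / 2) * |t| ^ (-(2 + α)))) ∧
    lamK α R 0 < 0 ∧ lamK α R 1 = 0 ∧ StrictMono (lamK α R) :=
  eigenvalues_strictly_increasing_general α R hα hR hR1
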